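/- arXiv:2311.17356 — 3 statements merged into one kernel-verified Lean document; each statement's English description precedes it below -/
import Mathlib

section
/- Let f₁, f₂ ∈ D^{1,p}(X) with ‖f₁ − f₂‖_{D^{1,p}(X)} = 0. Then there exists a family Γ of nonconstant compact rectifiable curves with Mod_p(Γ) = 0 such that for every nonconstant compact rectifiable curve γ not in Γ, the composition (f₁ − f₂) ∘ γ is constant, i.e., f₁ ∘ γ − f₂ ∘ γ is constant along γ. -/
open MeasureTheory ENNReal NNReal Set Metric Filter

noncomputable section

/-- A (compact rectifiable) curve in a metric space `X`, given by a `1`-Lipschitz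
(arclength-type) parametrization on the interval `[0, len]`. -/
structure Curve (X : Type*) [MetricSpace X] where
  toFun : ℝ → X
  len : ℝ
  len_nonneg : 0 ≤ len
  lip : LipschitzOnWith 1 toFun (Set.Icc 0 len)

namespace Curve

variable {X : Type*} [MetricSpace X]

/-- The curve (line) integral `∫_γ g ds` of a nonnegative Borel function. -/
def integral (γ : Curve X) (g : X → ℝ≥0∞) : ℝ≥0∞ :=
  ∫⁻ t in Set.Icc (0 : ℝ) γ.len, g (γ.toFun t)

/-- A curve is nonconstant if it attains at least two distinct values. -/
def Nonconstant (γ : Curve X) : Prop :=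
  ∃ s ∈ Set.Icc (0 : ℝ) γ.len, ∃ t ∈ Set.Icc (0 : ℝ) γ.len, γ.toFun s ≠ γ.toFun t

end Curve

variable {X : Type*} [MetricSpace X] [MeasurableSpace X] [BorelSpace X]

/-- `g` is an upper gradient of `f`: for every rectifiable curve `γ`,
`|f(γ(b)) - f(γ(a))| ≤ ∫_γ g ds`. -/
def IsUpperGradient (f : X → ℝ) (g : X → ℝ≥0∞) : Prop :=
  Measurable g ∧ ∀ γ : Curve X,
    ENNReal.ofReal |f (γ.toFun γ.len) - f (γ.toFun 0)| ≤ γ.integral g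

/-- The family `Γ` of curves has `p`-modulus zero: there is a nonnegative Borel `ρ`
with `∫ ρ^p dμ < ∞` and `∫_γ ρ ds = ∞` for every `γ ∈ Γ`. -/
def ModZero (μ : Measure X) (p : ℝ) (Γ : Set (Curve X)) : Prop :=
  ∃ ρ : X → ℝ≥0∞, Measurable ρ ∧ (∫⁻ x, ρ x ^ p ∂μ) < ∞ ∧ ∀ γ ∈ Γ, γ.integral ρ = ∞

/-- The family of nonconstant compact rectifiable curves meeting a set `E`. -/
def CurvesMeeting (E : Set X) : Set (Curve X) :=
  {γ | γ.Nonconstant ∧ ∃ t ∈ Set.Icc (0 : ℝ) γ.len, γ.toFun t ∈ E}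

/-- A set `E` is `p`-exceptional if `μ E = 0` and the family of nonconstant
compact rectifiable curves meeting `E` has `p`-modulus zero. -/
def PExceptional (μ : Measure X) (p : ℝ) (E : Set X) : Prop :=
  μ E = 0 ∧ ModZero μ p (CurvesMeeting E)

/-- The homogeneous `D^{1,p}` seminorm: infimum of `(∫ g^p dμ)^{1/p}` over upper gradients. -/
def eLpSeminormD (μ : Measure X) (p : ℝ) (f : X → ℝ) : ℝ≥0∞ :=
  ⨅ (g : X → ℝ≥0∞) (_ : IsUpperGradient f g), (∫⁻ x, g x ^ p ∂μ) ^ (1 / p)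

/-- Membership in the homogeneous Newton-Sobolev class `D^{1,p}(X)`:
`f` has an upper gradient `g` with `∫ g^p dμ < ∞`. -/
def MemD1p (μ : Measure X) (p : ℝ) (f : X → ℝ) : Prop :=
  ∃ g : X → ℝ≥0∞, IsUpperGradient f g ∧ (∫⁻ x, g x ^ p ∂μ) < ∞

/-- The `N^{1,p}` norm: `(∫ |f|^p dμ)^{1/p} + inf_g (∫ g^p dμ)^{1/p}`. -/
def normN1p (μ : Measure X) (p : ℝ) (f : X → ℝ) : ℝ≥0∞ :=
  (∫⁻ x, ENNReal.ofReal |f x| ^ p ∂μ) ^ (1 / p) + eLpSeminormD μ p f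

/-- All balls have positive and finite measure. -/
def BallsPosFinite (μ : Measure X) : Prop :=
  ∀ (x : X) (r : ℝ), 0 < r → 0 < μ (Metric.ball x r) ∧ μ (Metric.ball x r) < ∞

/-- The measure `μ` is doubling. -/
def DoublingMeasure (μ : Measure X) : Prop :=
  ∃ Cd : ℝ≥0, ∀ (x : X) (r : ℝ), 0 < r →
    μ (Metric.ball x (2 * r)) ≤ Cd * μ (Metric.ball x r)

/-- The `p`-Poincaré inequality with constants `C` and `lam`. -/
def PoincareIneq (μ : Measure X) (p C lam : ℝ) : Prop :=
  ∀ (f : X → ℝ) (g : X → ℝ≥0∞), Measurable f → IsUpperGradient f g →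
    ∀ (x : X) (r : ℝ), 0 < r →
      (⨍⁻ y in Metric.ball x r,
          ENNReal.ofReal |f y - ⨍ z in Metric.ball x r, f z ∂μ| ∂μ) ≤
        ENNReal.ofReal (C * r) *
          (⨍⁻ y in Metric.ball x (lam * r), g y ^ p ∂μ) ^ (1 / p)

/-- The `(p,p)`-Poincaré inequality with constants `C₀` and `lam₀`. -/
def PoincarePP (μ : Measure X) (p C₀ lam₀ : ℝ) : Prop :=
  ∀ (f : X → ℝ) (g : X → ℝ≥0∞), Measurable f → IsUpperGradient f g →
    (∫⁻ x, g x ^ p ∂μ) < ∞ →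
    ∀ (x : X) (r : ℝ), 0 < r →
      (⨍⁻ y in Metric.ball x r,
          ENNReal.ofReal |f y - ⨍ z in Metric.ball x r, f z ∂μ| ^ p ∂μ) ^ (1 / p) ≤
        ENNReal.ofReal (C₀ * r) *
          (⨍⁻ y in Metric.ball x (lam₀ * r), g y ^ p ∂μ) ^ (1 / p)

private lemma my_iSup_rpow (f : ℕ → ℝ≥0∞) {q : ℝ} (hq : 0 < q) :
    (⨆ n, f n) ^ q = ⨆ n, f n ^ q :=
  OrderIso.map_iSup (ENNReal.orderIsoRpow q hq) f

/-- if `‖f₁ - f₂‖_{D^{1,p}} = 0`, then off a curve family of `p`-modulus zero,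
`f₁ - f₂` is constant along every nonconstant compact rectifiable curve. -/
theorem stmt5 (μ : Measure X) [μ.Regular] (p : ℝ) (hp : 1 ≤ p)
    (f₁ f₂ : X → ℝ) (h₁ : MemD1p μ p f₁) (h₂ : MemD1p μ p f₂)
    (h : eLpSeminormD μ p (fun x => f₁ x - f₂ x) = 0) :
    ∃ Γ : Set (Curve X), ModZero μ p Γ ∧
      ∀ γ : Curve X, γ.Nonconstant → γ ∉ Γ →
        ∀ s ∈ Set.Icc (0 : ℝ) γ.len, ∀ t ∈ Set.Icc (0 : ℝ) γ.len,
          f₁ (γ.toFun s) - f₂ (γ.toFun s) = f₁ (γ.toFun t) - f₂ (γ.toFun t) := by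
  have hp0 : (0 : ℝ) < p := lt_of_lt_of_le one_pos hp
  have hp0' : (0 : ℝ) < 1 / p := by positivity
  set u : X → ℝ := fun x => f₁ x - f₂ x with hu
  -- choose a sequence of upper gradients with small norms
  have hsel : ∀ k : ℕ, ∃ g : X → ℝ≥0∞, IsUpperGradient u g ∧
      (∫⁻ x, g x ^ p ∂μ) ^ (1 / p) < (2 : ℝ≥0∞)⁻¹ ^ (k + 1) := by
    intro k
    have hpos : (0 : ℝ≥0∞) < (2 : ℝ≥0∞)⁻¹ ^ (k + 1) :=
      ENNReal.pow_pos (ENNReal.inv_pos.2 ENNReal.ofNat_ne_top) _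
    have hlt : eLpSeminormD μ p u < (2 : ℝ≥0∞)⁻¹ ^ (k + 1) := by rw [h]; exact hpos
    simp only [eLpSeminormD, iInf_lt_iff] at hlt
    obtain ⟨g, hg, hglt⟩ := hlt
    exact ⟨g, hg, hglt⟩
  choose g hg hglt using hsel
  have hgmeas : ∀ k, Measurable (g k) := fun k => (hg k).1
  set ρ : X → ℝ≥0∞ := fun x => ∑' k, g k x with hρ
  have hρmeas : Measurable ρ := Measurable.ennreal_tsum hgmeas
  -- partial sums
  set S : ℕ → X → ℝ≥0∞ := fun n x => ∑ k ∈ Finset.range n, g k x with hSdef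
  have hSmeas : ∀ n, Measurable (S n) := fun n => Finset.measurable_sum _ fun k _ => hgmeas k
  -- Minkowski for the partial sums
  have hS : ∀ n, (∫⁻ x, S n x ^ p ∂μ) ^ (1 / p) ≤ 1 := by
    intro n
    have key : ∀ n, (∫⁻ x, S n x ^ p ∂μ) ^ (1 / p) ≤
        ∑ k ∈ Finset.range n, (2 : ℝ≥0∞)⁻¹ ^ (k + 1) := by
      intro n
      induction n with
      | zero =>
        simp only [hSdef, Finset.range_zero, Finset.sum_empty, Finset.sum_empty,
          ENNReal.zero_rpow_of_pos hp0, lintegral_zero, ENNReal.zero_rpow_of_pos hp0']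
        exact le_refl 0
      | succ n ih =>
        have hstep : (∫⁻ x, S (n + 1) x ^ p ∂μ) ^ (1 / p) ≤
            (∫⁻ x, S n x ^ p ∂μ) ^ (1 / p) + (∫⁻ x, g n x ^ p ∂μ) ^ (1 / p) := by
          have := ENNReal.lintegral_Lp_add_le (μ := μ)
            (hSmeas n).aemeasurable (hgmeas n).aemeasurable hp
          simpa [hSdef, Finset.sum_range_succ] using this
        calc (∫⁻ x, S (n + 1) x ^ p ∂μ) ^ (1 / p)
            ≤ (∫⁻ x, S n x ^ p ∂μ) ^ (1 / p) + (∫⁻ x, g n x ^ p ∂μ) ^ (1 / p) := hstep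
          _ ≤ (∑ k ∈ Finset.range n, (2 : ℝ≥0∞)⁻¹ ^ (k + 1)) + (2 : ℝ≥0∞)⁻¹ ^ (n + 1) :=
              add_le_add ih (hglt n).le
          _ = ∑ k ∈ Finset.range (n + 1), (2 : ℝ≥0∞)⁻¹ ^ (k + 1) :=
              (Finset.sum_range_succ _ n).symm
    refine (key n).trans ?_
    calc ∑ k ∈ Finset.range n, (2 : ℝ≥0∞)⁻¹ ^ (k + 1)
        ≤ ∑' k : ℕ, (2 : ℝ≥0∞)⁻¹ ^ (k + 1) := ENNReal.sum_le_tsum _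
      _ = (2 : ℝ≥0∞)⁻¹ * ∑' k : ℕ, (2 : ℝ≥0∞)⁻¹ ^ k := by
          rw [← ENNReal.tsum_mul_left]
          congr 1; ext k; ring
      _ = (2 : ℝ≥0∞)⁻¹ * (1 - 2⁻¹)⁻¹ := by rw [ENNReal.tsum_geometric]
      _ ≤ 1 := by
          rw [ENNReal.one_sub_inv_two, inv_inv]
          exact le_of_eq (ENNReal.inv_mul_cancel (by norm_num) ENNReal.ofNat_ne_top)
  -- finiteness of ∫ ρ^p
  have hρint : (∫⁻ x, ρ x ^ p ∂μ) < ∞ := by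
    have hpt : ∀ x, ρ x ^ p = ⨆ n, S n x ^ p := by
      intro x
      rw [hρ]
      simp only
      rw [ENNReal.tsum_eq_iSup_nat, my_iSup_rpow _ hp0]
    have hmono : Monotone fun n => fun x => S n x ^ p := by
      intro m n hmn
      refine fun x => ENNReal.rpow_le_rpow ?_ hp0.le
      exact Finset.sum_le_sum_of_subset (Finset.range_subset_range.2 hmn)
    calc (∫⁻ x, ρ x ^ p ∂μ) = ∫⁻ x, ⨆ n, S n x ^ p ∂μ := by
          congr 1; ext x; exact hpt x
      _ = ⨆ n, ∫⁻ x, S n x ^ p ∂μ :=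
          lintegral_iSup (fun n => (hSmeas n).pow_const p) fun m n hmn x => hmono hmn x
      _ ≤ 1 ^ p := by
          refine iSup_le fun n => ?_
          have := ENNReal.rpow_le_rpow (hS n) hp0.le
          rwa [← ENNReal.rpow_mul, one_div_mul_cancel hp0.ne', ENNReal.rpow_one] at this
      _ < ∞ := by simp
  -- the exceptional curve family
  refine ⟨{γ : Curve X | γ.integral ρ = ∞}, ⟨ρ, hρmeas, hρint, fun γ hγ => hγ⟩, ?_⟩
  intro γ _ hγΓ
  have hγfin : γ.integral ρ ≠ ∞ := hγΓ
  -- key step for ordered pairs s ≤ t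
  have key : ∀ s ∈ Set.Icc (0 : ℝ) γ.len, ∀ t ∈ Set.Icc (0 : ℝ) γ.len, s ≤ t →
      u (γ.toFun s) = u (γ.toFun t) := by
    intro s hs t ht hst
    have haem : ∀ k : ℕ, AEMeasurable (fun r => g k (γ.toFun r))
        (volume.restrict (Set.Icc (0 : ℝ) γ.len)) := fun k =>
      (hgmeas k).comp_aemeasurable
        (γ.lip.continuousOn.aemeasurable measurableSet_Icc)
    -- the restricted curve
    have hlip : LipschitzOnWith 1 (fun r => γ.toFun (r + s)) (Set.Icc 0 (t - s)) := by
      intro x hx y hy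
      have hx' : x + s ∈ Set.Icc (0 : ℝ) γ.len :=
        ⟨by linarith [hx.1, hs.1], by linarith [hx.2, ht.2]⟩
      have hy' : y + s ∈ Set.Icc (0 : ℝ) γ.len :=
        ⟨by linarith [hy.1, hs.1], by linarith [hy.2, ht.2]⟩
      have := γ.lip hx' hy'
      rwa [edist_add_right] at this
    set δ : Curve X := ⟨fun r => γ.toFun (r + s), t - s, sub_nonneg.2 hst, hlip⟩ with hδ
    -- each g k controls |u(γ t) - u(γ s)|
    have hbound : ∀ k : ℕ, ENNReal.ofReal |u (γ.toFun t) - u (γ.toFun s)| ≤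
        ∫⁻ r in Set.Icc (0 : ℝ) γ.len, g k (γ.toFun r) := by
      intro k
      have h1 := (hg k).2 δ
      have hend : δ.toFun δ.len = γ.toFun t := by simp [hδ]
      have hstart : δ.toFun 0 = γ.toFun s := by simp [hδ]
      rw [hend, hstart] at h1
      refine h1.trans ?_
      have htrans : δ.integral (g k) = ∫⁻ r in Set.Icc s t, g k (γ.toFun r) := by
        show (∫⁻ r in Set.Icc (0 : ℝ) (t - s), g k (γ.toFun (r + s))) = _
        rw [← lintegral_indicator measurableSet_Icc, ← lintegral_indicator measurableSet_Icc,
          ← lintegral_add_right_eq_self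
            (fun r => (Set.Icc s t).indicator (fun r => g k (γ.toFun r)) r) s]
        congr 1
        ext r
        by_cases hr : r ∈ Set.Icc (0 : ℝ) (t - s)
        · have hr' : r + s ∈ Set.Icc s t := ⟨by linarith [hr.1], by linarith [hr.2]⟩
          simp [Set.indicator_of_mem, hr, hr']
        · have hr' : r + s ∉ Set.Icc s t := fun hc => hr ⟨by linarith [hc.1], by linarith [hc.2]⟩
          simp [Set.indicator_of_notMem, hr, hr']
      rw [htrans]
      exact lintegral_mono_set (Set.Icc_subset_Icc hs.1 ht.2)
    -- sum up
    have hsum : (∑' k : ℕ, ∫⁻ r in Set.Icc (0 : ℝ) γ.len, g k (γ.toFun r)) = γ.integral ρ := by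
      rw [Curve.integral, ← lintegral_tsum haem]
    by_contra hne
    have habs : ENNReal.ofReal |u (γ.toFun t) - u (γ.toFun s)| ≠ 0 := by
      simp only [ne_eq, ENNReal.ofReal_eq_zero, not_le]
      have : u (γ.toFun t) - u (γ.toFun s) ≠ 0 := sub_ne_zero.2 fun hc => hne (hc.symm)
      exact abs_pos.2 this
    have : (∞ : ℝ≥0∞) ≤ γ.integral ρ := by
      calc (∞ : ℝ≥0∞) = ∑' _ : ℕ, ENNReal.ofReal |u (γ.toFun t) - u (γ.toFun s)| :=
            (ENNReal.tsum_const_eq_top_of_ne_zero habs).symm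
        _ ≤ ∑' k : ℕ, ∫⁻ r in Set.Icc (0 : ℝ) γ.len, g k (γ.toFun r) :=
            ENNReal.tsum_le_tsum hbound
        _ = γ.integral ρ := hsum
    exact hγfin (top_le_iff.mp this)
  intro s hs t ht
  show u (γ.toFun s) = u (γ.toFun t)
  rcases le_total s t with hst | hst
  · exact key s hs t ht hst
  · exact (key t ht s hs hst).symm
end
end

section
/- Suppose a metric measure space (X, d, μ) with all balls of positive finite measure supports a p-Poincaré inequality. Then X is connected. -/
open MeasureTheory ENNReal NNReal Set Metric Filter

noncomputable section

variable {X : Type*} [MetricSpace X] [MeasurableSpace X] [BorelSpace X]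

/-!
A locally constant function is constant along every curve, so `0` is an upper gradient of it, and
the Poincaré inequality makes it almost everywhere equal to its average on each ball. Since balls
have positive measure it is then constant on each ball, and any two points lie in a common ball.
Applied to the indicator of a clopen set, this rules out disconnections.
-/

theorem Curve.isPreconnected_image {Y : Type*} [MetricSpace Y] (γ : Curve Y) :
    IsPreconnected (γ.toFun '' Icc 0 γ.len) :=
  isPreconnected_Icc.image _ γ.lip.continuousOn

section

variable {Y : Type*} [MetricSpace Y] [MeasurableSpace Y]

theorem IsLocallyConstant.isUpperGradient_zero {f : Y → ℝ} (hf : IsLocallyConstant f) :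
    IsUpperGradient f 0 := by
  refine ⟨measurable_const, fun γ => ?_⟩
  have hγ : f (γ.toFun γ.len) = f (γ.toFun 0) :=
    hf.apply_eq_of_isPreconnected γ.isPreconnected_image
      ⟨γ.len, right_mem_Icc.2 γ.len_nonneg, rfl⟩ ⟨0, left_mem_Icc.2 γ.len_nonneg, rfl⟩
  simp [hγ]

theorem BallsPosFinite.isOpenPosMeasure {μ : Measure Y} (hμ : BallsPosFinite μ) :
    μ.IsOpenPosMeasure where
  open_pos U hU := fun ⟨x, hx⟩ => by
    obtain ⟨ε, hε, hball⟩ := Metric.isOpen_iff.1 hU x hx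
    exact ((hμ x ε hε).1.trans_le (measure_mono hball)).ne'

theorem PoincareIneq.ae_eq_setAverage_of_isUpperGradient_zero {μ : Measure Y} {p C lam : ℝ}
    (hPI : PoincareIneq μ p C lam) (hp : 0 < p) {f : Y → ℝ} (hf : Measurable f)
    (hg : IsUpperGradient f 0) {x : Y} {r : ℝ} (hr : 0 < r) (hB : μ (ball x r) ≠ ⊤) :
    f =ᵐ[μ.restrict (ball x r)] fun _ => ⨍ z in ball x r, f z ∂μ := by
  set c := ⨍ z in ball x r, f z ∂μ
  have hmean : ⨍⁻ y in ball x r, ENNReal.ofReal |f y - c| ∂μ = 0 := by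
    refine le_antisymm ((hPI f 0 hf hg x r hr).trans_eq ?_) zero_le
    simp [ENNReal.zero_rpow_of_pos hp, hp]
  have hint : ∫⁻ y in ball x r, ENNReal.ofReal |f y - c| ∂μ = 0 := by
    rw [setLAverage_eq, ENNReal.div_eq_zero_iff] at hmean
    exact hmean.resolve_right hB
  filter_upwards [(lintegral_eq_zero_iff (hf.sub measurable_const).abs.ennreal_ofReal).1 hint]
    with y hy
  simpa [sub_eq_zero] using hy

theorem PoincareIneq.apply_eq_of_isLocallyConstant [BorelSpace Y] {μ : Measure Y} {p C lam : ℝ}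
    (hPI : PoincareIneq μ p C lam) (hp : 0 < p) (hμ : BallsPosFinite μ) {f : Y → ℝ}
    (hf : IsLocallyConstant f) (x y : Y) : f x = f y := by
  have := hμ.isOpenPosMeasure
  have hr : 0 < dist y x + 1 := by positivity
  have hconst := Measure.eqOn_open_of_ae_eq
    (hPI.ae_eq_setAverage_of_isUpperGradient_zero hp hf.continuous.measurable
      hf.isUpperGradient_zero hr (hμ x _ hr).2.ne)
    isOpen_ball hf.continuous.continuousOn continuousOn_const
  exact (hconst (mem_ball_self hr)).trans (hconst (by simp)).symm

theorem PoincareIneq.preconnectedSpace [BorelSpace Y] {μ : Measure Y} {p C lam : ℝ}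
    (hPI : PoincareIneq μ p C lam) (hp : 0 < p) (hμ : BallsPosFinite μ) : PreconnectedSpace Y :=
  preconnectedSpace_of_forall_constant fun f hf x y => by
    have hf' := ((IsLocallyConstant.iff_continuous f).2 hf).comp
      fun b => if b = f x then (0 : ℝ) else 1
    simpa [eq_comm] using hPI.apply_eq_of_isLocallyConstant hp hμ hf' y x

end

theorem stmt9_general (μ : Measure X) [Nonempty X] (p : ℝ) (hp : 1 ≤ p)
    (hballs : BallsPosFinite μ)
    (hPI : ∃ C > (0 : ℝ), ∃ lam ≥ (1 : ℝ), PoincareIneq μ p C lam) :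
    ConnectedSpace X := by
  obtain ⟨C, -, lam, -, hPI⟩ := hPI
  have := hPI.preconnectedSpace (by linarith) hballs
  exact { toPreconnectedSpace := this, toNonempty := ‹_› }

/-- a metric measure space with all balls of positive finite measure
supporting a `p`-Poincaré inequality is connected. -/
theorem stmt9 (μ : Measure X) [μ.Regular] [Nonempty X] (p : ℝ) (hp : 1 ≤ p)
    (hballs : BallsPosFinite μ)
    (hPI : ∃ C > (0 : ℝ), ∃ lam ≥ (1 : ℝ), PoincareIneq μ p C lam) :
    ConnectedSpace X :=
  stmt9_general μ p hp hballs hPI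
end
end

section
/- If μ is doubling and supports a p-Poincaré inequality, then the homogeneous Newton-Sobolev space HN^{1,p}(X) = D^{1,p}(X)/∼, where f₁ ∼ f₂ iff ‖f₁ − f₂‖_{D^{1,p}(X)} = 0, equipped with the quotient norm induced by ‖·‖_{D^{1,p}(X)}, is a complete normed space (a Banach space). -/
/-!
Pass to a subsequence `u (k j)` with `‖u (k (j + 1)) - u (k j)‖ < 2⁻¹ ^ j` and pick upper gradients
`g j` of these differences `w j` with `‖g j‖_p < 2⁻¹ ^ j`; it suffices that the telescoping series
`∑ w j` converges in `D^{1,p}`. Along a curve `γ` with `∫_γ ∑ g j < ∞` the increments of the `w j`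
are absolutely summable, so on each class of points joined by chains of such curves the series
converges once its value at a base point is subtracted. The remaining curves have `p`-modulus zero,
witnessed by `∑ g j ∈ L^p`, so the tails `∑_{i ≥ j} g i` are `p`-weak upper gradients of the
remainders; and a `p`-weak upper gradient `g` bounds the seminorm, because `g + ε ρ` is a genuine
upper gradient for the witness `ρ` of modulus zero.
-/

open MeasureTheory ENNReal NNReal Set Metric Filter

noncomputable section

variable {X : Type*} [MetricSpace X] [MeasurableSpace X] [BorelSpace X]

theorem eLpNorm'_tsum_le {α : Type*} [MeasurableSpace α] {μ : Measure α} {q : ℝ}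
    {g : ℕ → α → ℝ≥0∞} (hg : ∀ i, AEMeasurable (g i) μ) (hq : 1 ≤ q) :
    eLpNorm' (fun x => ∑' i, g i x) q μ ≤ ∑' i, eLpNorm' (g i) q μ := by
  have hq0 : 0 < q := zero_lt_one.trans_le hq
  have hpow : ∀ (s : ℕ → ℝ≥0∞) {r : ℝ} (hr : 0 < r), (⨆ n, s n) ^ r = ⨆ n, s n ^ r :=
    fun s r hr => (ENNReal.orderIsoRpow r hr).map_iSup s
  have hmono : Monotone fun n x => ∑ i ∈ Finset.range n, g i x :=
    fun m n hmn x => Finset.sum_le_sum_of_subset (Finset.range_subset_range.2 hmn)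
  have hsup : eLpNorm' (fun x => ∑' i, g i x) q μ =
      ⨆ n, eLpNorm' (fun x => ∑ i ∈ Finset.range n, g i x) q μ := by
    simp only [eLpNorm', enorm_eq_self, ENNReal.tsum_eq_iSup_nat, hpow _ hq0]
    rw [lintegral_iSup' (fun n => (Finset.aemeasurable_fun_sum _ fun i _ => hg i).pow_const q)
      (.of_forall fun x m n hmn => ENNReal.rpow_le_rpow (hmono hmn x) hq0.le),
      hpow _ (by positivity)]
  rw [hsup, ENNReal.tsum_eq_iSup_nat]
  refine iSup_mono fun n => ?_
  have h := eLpNorm'_sum_le (s := Finset.range n) (fun i _ => (hg i).aestronglyMeasurable) hq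
  rwa [Finset.sum_fn] at h

theorem eLpNorm'_const_mul {α : Type*} [MeasurableSpace α] {μ : Measure α} {q : ℝ} (hq : 0 < q)
    (c : ℝ≥0∞) {f : α → ℝ≥0∞} (hf : AEMeasurable f μ) :
    eLpNorm' (fun x => c * f x) q μ = c * eLpNorm' f q μ := by
  simp only [eLpNorm', enorm_eq_self, ENNReal.mul_rpow_of_nonneg _ _ hq.le]
  rw [lintegral_const_mul'' _ (hf.pow_const q), ENNReal.mul_rpow_of_nonneg _ _ (by positivity),
    ← ENNReal.rpow_mul, mul_one_div_cancel hq.ne', ENNReal.rpow_one]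

theorem exists_strictMono_forall_ge_lt {d : ℕ → ℕ → ℝ≥0∞}
    (hd : ∀ ε : ℝ, 0 < ε → ∃ N : ℕ, ∀ m ≥ N, ∀ n ≥ N, d m n < ENNReal.ofReal ε) :
    ∃ k : ℕ → ℕ, StrictMono k ∧ ∀ j, ∀ m ≥ k j, d m (k j) < 2⁻¹ ^ j := by
  refine extraction_forall_of_eventually' (P := fun j K => ∀ m ≥ K, d m K < 2⁻¹ ^ j) fun j => ?_
  obtain ⟨N, hN⟩ := hd ((2⁻¹ : ℝ) ^ j) (by positivity)
  refine ⟨N, fun K hK m hm => ?_⟩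
  simpa [ENNReal.ofReal_pow, ENNReal.ofReal_inv_of_pos, ENNReal.inv_pow] using
    hN m (hK.trans hm) K hK

theorem tsum_inv_two_pow_add (j : ℕ) : ∑' i : ℕ, (2⁻¹ : ℝ≥0∞) ^ (i + j) = 2 * 2⁻¹ ^ j := by
  simp_rw [pow_add]
  rw [ENNReal.tsum_mul_right, ENNReal.tsum_geometric, ENNReal.one_sub_inv_two, inv_inv]

section UpperGradients

-- Rebinding `X` keeps the ambient `[BorelSpace X]` out of the lemmas that do not need it.
variable {X : Type*} [MetricSpace X] [MeasurableSpace X]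

namespace Curve

variable [BorelSpace X] (γ : Curve X) {g g' : X → ℝ≥0∞}

theorem aemeasurable_comp (hg : Measurable g) :
    AEMeasurable (fun t => g (γ.toFun t)) (volume.restrict (Icc 0 γ.len)) :=
  hg.comp_aemeasurable (γ.lip.continuousOn.aemeasurable measurableSet_Icc)

theorem integral_add (hg : Measurable g) :
    γ.integral (g + g') = γ.integral g + γ.integral g' :=
  lintegral_add_left' (γ.aemeasurable_comp hg) _

theorem integral_const_mul (c : ℝ≥0∞) (hg : Measurable g) :
    γ.integral (fun x => c * g x) = c * γ.integral g :=
  lintegral_const_mul'' c (γ.aemeasurable_comp hg)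

theorem integral_tsum {g : ℕ → X → ℝ≥0∞} (hg : ∀ i, Measurable (g i)) :
    γ.integral (fun x => ∑' i, g i x) = ∑' i, γ.integral (g i) :=
  lintegral_tsum fun i => γ.aemeasurable_comp (hg i)

end Curve

variable {μ : Measure X} {p : ℝ} {f f' : X → ℝ} {g g' : X → ℝ≥0∞}

theorem IsUpperGradient.add [BorelSpace X] (hf : IsUpperGradient f g)
    (hf' : IsUpperGradient f' g') : IsUpperGradient (f + f') (g + g') := by
  refine ⟨hf.1.add hf'.1, fun γ => ?_⟩
  rw [γ.integral_add hf.1, Pi.add_apply, Pi.add_apply, add_sub_add_comm]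
  exact (ENNReal.ofReal_le_ofReal (abs_add_le _ _)).trans
    (ENNReal.ofReal_add_le.trans (add_le_add (hf.2 γ) (hf'.2 γ)))

theorem IsUpperGradient.neg (hf : IsUpperGradient f g) : IsUpperGradient (-f) g := by
  refine ⟨hf.1, fun γ => ?_⟩
  rw [Pi.neg_apply, Pi.neg_apply, neg_sub_neg, abs_sub_comm]
  exact hf.2 γ

theorem eLpSeminormD_le_eLpNorm' (hf : IsUpperGradient f g) :
    eLpSeminormD μ p f ≤ eLpNorm' g p μ :=
  iInf₂_le g hf

theorem exists_isUpperGradient_eLpNorm'_lt {c : ℝ≥0∞} (h : eLpSeminormD μ p f < c) :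
    ∃ g, IsUpperGradient f g ∧ eLpNorm' g p μ < c := by
  obtain ⟨g, hg⟩ := iInf_lt_iff.1 h
  obtain ⟨hfg, hlt⟩ := iInf_lt_iff.1 hg
  exact ⟨g, hfg, hlt⟩

theorem memD1p_iff_eLpSeminormD_lt_top (hp : 0 < p) :
    MemD1p μ p f ↔ eLpSeminormD μ p f < ∞ := by
  refine ⟨fun ⟨g, hg, hint⟩ => ?_, fun h => ?_⟩
  · exact (eLpSeminormD_le_eLpNorm' hg).trans_lt
      (ENNReal.rpow_lt_top_of_nonneg (by positivity) hint.ne)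
  · obtain ⟨g, hg, hlt⟩ := exists_isUpperGradient_eLpNorm'_lt h
    exact ⟨g, hg, lintegral_rpow_enorm_lt_top_of_eLpNorm'_lt_top hp hlt⟩

theorem eLpSeminormD_add_le [BorelSpace X] (hp : 1 ≤ p) :
    eLpSeminormD μ p (f + f') ≤ eLpSeminormD μ p f + eLpSeminormD μ p f' := by
  simp_rw [eLpSeminormD, ENNReal.iInf_add, ENNReal.add_iInf]
  refine le_iInf₂ fun g hg => le_iInf₂ fun g' hg' => ?_
  exact (eLpSeminormD_le_eLpNorm' (hg.add hg')).trans
    (eLpNorm'_add_le hg.1.aestronglyMeasurable hg'.1.aestronglyMeasurable hp)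

theorem eLpSeminormD_neg : eLpSeminormD μ p (-f) = eLpSeminormD μ p f := by
  have key : ∀ f : X → ℝ, eLpSeminormD μ p (-f) ≤ eLpSeminormD μ p f :=
    fun f => le_iInf₂ fun g hg => eLpSeminormD_le_eLpNorm' hg.neg
  exact le_antisymm (key f) (by simpa only [neg_neg] using key (-f))

theorem eLpSeminormD_sub_le [BorelSpace X] (hp : 1 ≤ p) :
    eLpSeminormD μ p (f - f') ≤ eLpSeminormD μ p f + eLpSeminormD μ p f' := by
  simpa only [sub_eq_add_neg, eLpSeminormD_neg] using eLpSeminormD_add_le (f' := -f') hp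

end UpperGradients

section WeakUpperGradients

variable {μ : Measure X} {p : ℝ} {f : X → ℝ} {g : X → ℝ≥0∞}

def IsWeakUpperGradient (μ : Measure X) (p : ℝ) (f : X → ℝ) (g : X → ℝ≥0∞) : Prop :=
  Measurable g ∧ ∃ Γ : Set (Curve X), ModZero μ p Γ ∧
    ∀ γ ∉ Γ, ENNReal.ofReal |f (γ.toFun γ.len) - f (γ.toFun 0)| ≤ γ.integral g

theorem ModZero.exists_eLpNorm'_le {Γ : Set (Curve X)} (hp : 0 < p) (hΓ : ModZero μ p Γ)
    {ε : ℝ≥0∞} (hε : ε ≠ 0) :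
    ∃ ρ, Measurable ρ ∧ eLpNorm' ρ p μ ≤ ε ∧ ∀ γ ∈ Γ, γ.integral ρ = ∞ := by
  obtain ⟨ρ, hρ, hρp, hρΓ⟩ := hΓ
  have hN : eLpNorm' ρ p μ ≠ ∞ := (ENNReal.rpow_lt_top_of_nonneg (by positivity) hρp.ne).ne
  set c := ε / (eLpNorm' ρ p μ + 1)
  have hc : c ≠ 0 := by simp [c, hε, hN]
  refine ⟨fun x => c * ρ x, hρ.const_mul c, ?_, fun γ hγ => ?_⟩
  · calc eLpNorm' (fun x => c * ρ x) p μ = c * eLpNorm' ρ p μ :=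
          eLpNorm'_const_mul hp c hρ.aemeasurable
      _ ≤ c * (eLpNorm' ρ p μ + 1) := by gcongr; exact le_self_add
      _ = ε := ENNReal.div_mul_cancel (by simp) (by simpa using hN)
  · rw [γ.integral_const_mul c hρ, hρΓ γ hγ, ENNReal.mul_top hc]

theorem IsWeakUpperGradient.eLpSeminormD_le (hp : 1 ≤ p) (hf : IsWeakUpperGradient μ p f g) :
    eLpSeminormD μ p f ≤ eLpNorm' g p μ := by
  obtain ⟨hg, Γ, hΓ, hfΓ⟩ := hf
  refine ENNReal.le_of_forall_pos_le_add fun ε hε _ => ?_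
  obtain ⟨ρ, hρ, hρε, hρΓ⟩ :=
    hΓ.exists_eLpNorm'_le (zero_lt_one.trans_le hp) (ENNReal.coe_ne_zero.2 hε.ne')
  have hfgρ : IsUpperGradient f (g + ρ) := by
    refine ⟨hg.add hρ, fun γ => ?_⟩
    by_cases hγ : γ ∈ Γ
    · rw [γ.integral_add hg, hρΓ γ hγ, add_top]
      exact le_top
    · exact (hfΓ γ hγ).trans (lintegral_mono fun t => le_self_add)
  calc eLpSeminormD μ p f ≤ eLpNorm' (g + ρ) p μ := eLpSeminormD_le_eLpNorm' hfgρ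
    _ ≤ eLpNorm' g p μ + eLpNorm' ρ p μ :=
        eLpNorm'_add_le hg.aestronglyMeasurable hρ.aestronglyMeasurable hp
    _ ≤ eLpNorm' g p μ + ε := by gcongr

end WeakUpperGradients

section AbsolutelySummableSeries

variable {w : ℕ → X → ℝ} {g : ℕ → X → ℝ≥0∞}

def JoinedByFiniteCurve (ρ : X → ℝ≥0∞) (x y : X) : Prop :=
  ∃ γ : Curve X, γ.toFun 0 = x ∧ γ.toFun γ.len = y ∧ γ.integral ρ ≠ ∞

/-- The series `∑ wᵢ` need not converge pointwise, only its increments along curves of finite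
`ρ`-length do; so it is summed relative to a base point chosen in each class of the equivalence
relation generated by such curves. -/
def seriesSum (w : ℕ → X → ℝ) (ρ : X → ℝ≥0∞) (x : X) : ℝ :=
  ∑' i, (w i x - w i (Quotient.mk (Relation.EqvGen.setoid (JoinedByFiniteCurve ρ)) x).out)

theorem tsum_ofReal_abs_sub_le_integral_tsum (hw : ∀ i, IsUpperGradient (w i) (g i))
    (γ : Curve X) :
    ∑' i, ENNReal.ofReal |w i (γ.toFun γ.len) - w i (γ.toFun 0)| ≤
      γ.integral (fun x => ∑' i, g i x) := by
  rw [γ.integral_tsum fun i => (hw i).1]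
  exact ENNReal.tsum_le_tsum fun i => (hw i).2 γ

theorem summable_abs_sub_of_eqvGen (hw : ∀ i, IsUpperGradient (w i) (g i)) {x y : X}
    (h : Relation.EqvGen (JoinedByFiniteCurve fun x => ∑' i, g i x) x y) :
    Summable fun i => |w i y - w i x| := by
  induction h with
  | rel x y hxy =>
    obtain ⟨γ, rfl, rfl, hγ⟩ := hxy
    exact (ENNReal.summable_toReal (ne_top_of_le_ne_top hγ
      (tsum_ofReal_abs_sub_le_integral_tsum hw γ))).congr
      fun i => ENNReal.toReal_ofReal (abs_nonneg _)
  | refl x => simp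
  | symm x y _ ih => simpa only [abs_sub_comm] using ih
  | trans x y z _ _ ihxy ihyz =>
    exact (ihyz.add ihxy).of_nonneg_of_le (fun i => abs_nonneg _)
      fun i => abs_sub_le (w i z) (w i y) (w i x)

theorem seriesSum_sub_sum_apply_sub (hw : ∀ i, IsUpperGradient (w i) (g i)) {γ : Curve X}
    (hγ : γ.integral (fun x => ∑' i, g i x) ≠ ∞) (j : ℕ) :
    (seriesSum w (fun x => ∑' i, g i x) - ∑ i ∈ Finset.range j, w i) (γ.toFun γ.len) -
      (seriesSum w (fun x => ∑' i, g i x) - ∑ i ∈ Finset.range j, w i) (γ.toFun 0) =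
      ∑' i, (w (i + j) (γ.toFun γ.len) - w (i + j) (γ.toFun 0)) := by
  set a := γ.toFun 0
  set b := γ.toFun γ.len
  set s := Relation.EqvGen.setoid (JoinedByFiniteCurve fun x => ∑' i, g i x)
  have hjoin : JoinedByFiniteCurve (fun x => ∑' i, g i x) a b := ⟨γ, rfl, rfl, hγ⟩
  have hbase : (Quotient.mk s b).out = (Quotient.mk s a).out := by
    rw [Quotient.sound (s := s) (Relation.EqvGen.rel a b hjoin)]
  have ha : Summable fun i => w i a - w i (Quotient.mk s a).out :=
    (summable_abs_sub_of_eqvGen hw (Quotient.mk_out a)).of_abs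
  have hb : Summable fun i => w i b - w i (Quotient.mk s a).out :=
    hbase ▸ (summable_abs_sub_of_eqvGen hw (Quotient.mk_out b)).of_abs
  have hab : Summable fun i => w i b - w i a := by simpa using hb.sub ha
  have hS : seriesSum w (fun x => ∑' i, g i x) b - seriesSum w (fun x => ∑' i, g i x) a =
      ∑' i, (w i b - w i a) := by
    simp only [seriesSum]
    rw [hbase, ← hb.tsum_sub ha]
    simp
  rw [← hab.sum_add_tsum_nat_add j, Finset.sum_sub_distrib] at hS
  simp only [Pi.sub_apply, Finset.sum_apply]
  linarith

theorem isWeakUpperGradient_seriesSum_sub_sum {μ : Measure X} {p : ℝ} (hp : 1 ≤ p)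
    (hw : ∀ i, IsUpperGradient (w i) (g i)) (hg : ∑' i, eLpNorm' (g i) p μ ≠ ∞) (j : ℕ) :
    IsWeakUpperGradient μ p (seriesSum w (fun x => ∑' i, g i x) - ∑ i ∈ Finset.range j, w i)
      (fun x => ∑' i, g (i + j) x) := by
  have hρ : ∀ j, Measurable fun x => ∑' i, g (i + j) x :=
    fun j => Measurable.tsum fun i => (hw (i + j)).1
  refine ⟨hρ j, {γ | γ.integral (fun x => ∑' i, g i x) = ∞}, ?_, fun γ hγ => ?_⟩
  · refine ⟨_, hρ 0, ?_, fun γ hγ => hγ⟩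
    exact lintegral_rpow_enorm_lt_top_of_eLpNorm'_lt_top (by linarith)
      ((eLpNorm'_tsum_le (fun i => (hw i).1.aemeasurable) hp).trans_lt hg.lt_top)
  · rw [seriesSum_sub_sum_apply_sub hw hγ j, ← Real.enorm_eq_ofReal_abs]
    exact (enorm_tsum_le_tsum_enorm.trans_eq (by simp only [Real.enorm_eq_ofReal_abs])).trans
      (tsum_ofReal_abs_sub_le_integral_tsum (fun i => hw (i + j)) γ)

theorem exists_eLpSeminormD_sub_sum_le {μ : Measure X} {p : ℝ} (hp : 1 ≤ p)
    (hw : ∀ i, IsUpperGradient (w i) (g i)) (hg : ∑' i, eLpNorm' (g i) p μ ≠ ∞) :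
    ∃ S : X → ℝ, ∀ j, eLpSeminormD μ p (S - ∑ i ∈ Finset.range j, w i) ≤
      ∑' i, eLpNorm' (g (i + j)) p μ :=
  ⟨_, fun j => ((isWeakUpperGradient_seriesSum_sub_sum hp hw hg j).eLpSeminormD_le hp).trans
    (eLpNorm'_tsum_le (fun i => (hw (i + j)).1.aemeasurable) hp)⟩

end AbsolutelySummableSeries

theorem tendsto_eLpSeminormD_sub_of_subseq {μ : Measure X} {p : ℝ} (hp : 1 ≤ p)
    {u : ℕ → X → ℝ} {v : X → ℝ} {k : ℕ → ℕ} {δ : ℕ → ℝ≥0∞} (hδ : Tendsto δ atTop (nhds 0))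
    (hu : ∀ j, ∀ m ≥ k j, eLpSeminormD μ p (u m - u (k j)) ≤ δ j)
    (hv : ∀ j, eLpSeminormD μ p (v - u (k j)) ≤ δ j) :
    Tendsto (fun m => eLpSeminormD μ p (u m - v)) atTop (nhds 0) := by
  rw [ENNReal.tendsto_nhds_zero]
  intro ε hε
  obtain ⟨j, hj⟩ := (ENNReal.tendsto_nhds_zero.1 (by simpa using hδ.add hδ) ε hε).exists
  filter_upwards [eventually_ge_atTop (k j)] with m hm
  calc eLpSeminormD μ p (u m - v) = eLpSeminormD μ p ((u m - u (k j)) - (v - u (k j))) := by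
        rw [sub_sub_sub_cancel_right]
    _ ≤ δ j + δ j := (eLpSeminormD_sub_le hp).trans (add_le_add (hu j m hm) (hv j))
    _ ≤ ε := hj

theorem stmt10_general (μ : Measure X) (p : ℝ) (hp : 1 ≤ p)
    (u : ℕ → X → ℝ) (hu : ∀ k, MemD1p μ p (u k))
    (hcauchy : ∀ ε : ℝ, 0 < ε → ∃ N : ℕ, ∀ m ≥ N, ∀ n ≥ N,
      eLpSeminormD μ p (fun x => u m x - u n x) < ENNReal.ofReal ε) :
    ∃ v : X → ℝ, MemD1p μ p v ∧
      Filter.Tendsto (fun k => eLpSeminormD μ p (fun x => u k x - v x))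
        Filter.atTop (nhds 0) := by
  obtain ⟨k, hk_mono, hk⟩ := exists_strictMono_forall_ge_lt hcauchy
  choose g hg hg_lt using fun i =>
    exists_isUpperGradient_eLpNorm'_lt (hk i (k (i + 1)) (hk_mono.monotone i.le_succ))
  have htail : ∀ j, ∑' i, eLpNorm' (g (i + j)) p μ ≤ 2 * 2⁻¹ ^ j := fun j =>
    (ENNReal.tsum_le_tsum fun i => (hg_lt (i + j)).le).trans (tsum_inv_two_pow_add j).le
  obtain ⟨S, hS⟩ := exists_eLpSeminormD_sub_sum_le hp hg
    (ne_top_of_le_ne_top (by simp) (htail 0))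
  have hv : ∀ j, u (k 0) + S - u (k j) = S - ∑ i ∈ Finset.range j, (u (k (i + 1)) - u (k i)) := by
    intro j
    rw [Finset.sum_range_sub (fun i => u (k i))]
    abel
  refine ⟨u (k 0) + S, ?_, tendsto_eLpSeminormD_sub_of_subseq hp (δ := fun j => 2 * 2⁻¹ ^ j) ?_
    (fun j m hm => (hk j m hm).le.trans ?_) fun j => hv j ▸ (hS j).trans (htail j)⟩
  · have hp0 : 0 < p := zero_lt_one.trans_le hp
    rw [memD1p_iff_eLpSeminormD_lt_top hp0]
    refine (eLpSeminormD_add_le hp).trans_lt (ENNReal.add_lt_top.2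
      ⟨(memD1p_iff_eLpSeminormD_lt_top hp0).1 (hu (k 0)), ?_⟩)
    simpa using (hS 0).trans_lt ((htail 0).trans_lt (by simp))
  · simpa using ENNReal.Tendsto.const_mul
      (ENNReal.tendsto_pow_atTop_nhds_zero_of_lt_one (by norm_num : (2⁻¹ : ℝ≥0∞) < 1))
      (Or.inr ENNReal.ofNat_ne_top)
  · exact le_mul_of_one_le_left' one_le_two

/-- completeness of the homogeneous Newton-Sobolev space `HN^{1,p}(X)`:
every Cauchy sequence with respect to the `D^{1,p}` seminorm (i.e. every Cauchy
sequence of the quotient space with its quotient norm) converges. -/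
theorem stmt10 (μ : Measure X) [μ.Regular] (p : ℝ) (hp : 1 ≤ p)
    (hballs : BallsPosFinite μ) (hdbl : DoublingMeasure μ)
    (hPI : ∃ C > (0 : ℝ), ∃ lam ≥ (1 : ℝ), PoincareIneq μ p C lam)
    (u : ℕ → X → ℝ) (hm : ∀ k, Measurable (u k)) (hu : ∀ k, MemD1p μ p (u k))
    (hcauchy : ∀ ε : ℝ, 0 < ε → ∃ N : ℕ, ∀ m ≥ N, ∀ n ≥ N,
      eLpSeminormD μ p (fun x => u m x - u n x) < ENNReal.ofReal ε) :
    ∃ v : X → ℝ, MemD1p μ p v ∧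
      Filter.Tendsto (fun k => eLpSeminormD μ p (fun x => u k x - v x))
        Filter.atTop (nhds 0) :=
  stmt10_general μ p hp u hu hcauchy
end
end
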